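/- Let ε : M₄ → M₄ be a ℂ-linear map such that: (i) ε(m) ∈ N for every m ∈ M₄; (ii) ε is an N-bimodule map, i.e. ε((n ⊗ₖ 1) * m * (n' ⊗ₖ 1)) = (n ⊗ₖ 1) * ε(m) * (n' ⊗ₖ 1) for all n, n' ∈ M₂ and m ∈ M₄; (iii) ε is parity covariant, i.e. ε(Θ₂(m)) = Θ₂(ε(m)) for all m ∈ M₄. Then ε annihilates the odd part of the second-site algebra: ε(a₂) = 0 and ε(star a₂) = 0. -/
import Mathlib


namespace CARMarkov

open Kronecker

noncomputable def a : Matrix (Fin 2) (Fin 2) ℂ := !![0,1;0,0]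

noncomputable def σz : Matrix (Fin 2) (Fin 2) ℂ := !![1,0;0,-1]

noncomputable def a₁ : Matrix (Fin 2 × Fin 2) (Fin 2 × Fin 2) ℂ :=
  a ⊗ₖ (1 : Matrix (Fin 2) (Fin 2) ℂ)

noncomputable def a₂ : Matrix (Fin 2 × Fin 2) (Fin 2 × Fin 2) ℂ :=
  σz ⊗ₖ a

noncomputable def Θ₂ (x : Matrix (Fin 2 × Fin 2) (Fin 2 × Fin 2) ℂ) :
    Matrix (Fin 2 × Fin 2) (Fin 2 × Fin 2) ℂ :=
  (σz ⊗ₖ σz) * x * (σz ⊗ₖ σz)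

/-- The first-site subalgebra `N = {n ⊗ₖ 1 : n ∈ M₂}` of `M₄`. -/
def firstSite : Set (Matrix (Fin 2 × Fin 2) (Fin 2 × Fin 2) ℂ) :=
  {m | ∃ n : Matrix (Fin 2) (Fin 2) ℂ, m = n ⊗ₖ (1 : Matrix (Fin 2) (Fin 2) ℂ)}

lemma σz_sq : σz * σz = 1 := by
  unfold σz
  ext i j
  fin_cases i <;> fin_cases j <;>
    simp [Matrix.mul_apply, Fin.sum_univ_two, Matrix.one_apply]

lemma σz_a_σz : σz * a * σz = -a := by
  unfold σz a
  ext i j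
  fin_cases i <;> fin_cases j <;>
    simp [Matrix.mul_apply, Fin.sum_univ_two]

lemma star_a : star a = !![0,0;1,0] := by
  unfold a
  ext i j
  fin_cases i <;> fin_cases j <;> simp [Matrix.conjTranspose_apply]

lemma σz_astar_σz : σz * (star a) * σz = -(star a) := by
  rw [star_a]
  unfold σz
  ext i j
  fin_cases i <;> fin_cases j <;>
    simp [Matrix.mul_apply, Fin.sum_univ_two]

lemma kron_star (x y : Matrix (Fin 2) (Fin 2) ℂ) :
    star (x ⊗ₖ y) = (star x) ⊗ₖ (star y) := by
  ext i j
  simp [Matrix.conjTranspose_apply, Matrix.kroneckerMap_apply, mul_comm]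

lemma star_σz : star σz = σz := by
  unfold σz
  ext i j
  fin_cases i <;> fin_cases j <;> simp [Matrix.conjTranspose_apply]

/-- A parity-covariant `N`-bimodule projection-like map onto the first site
annihilates the odd part of the second-site algebra. -/
theorem parity_covariant_bimodule_map_kills_odd
    (ε : Matrix (Fin 2 × Fin 2) (Fin 2 × Fin 2) ℂ →ₗ[ℂ]
         Matrix (Fin 2 × Fin 2) (Fin 2 × Fin 2) ℂ)
    (hrange : ∀ m, ε m ∈ firstSite)
    (hbimod : ∀ (n n' : Matrix (Fin 2) (Fin 2) ℂ)
        (m : Matrix (Fin 2 × Fin 2) (Fin 2 × Fin 2) ℂ),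
        ε ((n ⊗ₖ (1 : Matrix (Fin 2) (Fin 2) ℂ)) * m *
           (n' ⊗ₖ (1 : Matrix (Fin 2) (Fin 2) ℂ)))
        = (n ⊗ₖ (1 : Matrix (Fin 2) (Fin 2) ℂ)) * ε m *
          (n' ⊗ₖ (1 : Matrix (Fin 2) (Fin 2) ℂ)))
    (hparity : ∀ m, ε (Θ₂ m) = Θ₂ (ε m)) :
    ε a₂ = 0 ∧ ε (star a₂) = 0 := by
  have key : ∀ c : Matrix (Fin 2) (Fin 2) ℂ, σz * c * σz = -c →
      ε (σz ⊗ₖ c) = 0 := by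
    intro c hc
    set b := σz ⊗ₖ c with hb
    -- invariance under conjugation by σz ⊗ 1
    have h2 : (σz ⊗ₖ (1 : Matrix (Fin 2) (Fin 2) ℂ)) * b *
        (σz ⊗ₖ (1 : Matrix (Fin 2) (Fin 2) ℂ)) = b := by
      rw [hb, ← Matrix.mul_kronecker_mul, ← Matrix.mul_kronecker_mul]
      rw [show σz * σz * σz = σz by rw [σz_sq, one_mul]]
      rw [one_mul, mul_one]
    -- parity-odd
    have h1 : Θ₂ b = -b := by
      rw [hb]
      unfold Θ₂
      rw [← Matrix.mul_kronecker_mul, ← Matrix.mul_kronecker_mul]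
      rw [show σz * σz * σz = σz by rw [σz_sq, one_mul], hc]
      ext i j
      simp [Matrix.kroneckerMap_apply]
    obtain ⟨n, hn⟩ := hrange b
    -- from the bimodule property
    have e1 : ε b = (σz * n * σz) ⊗ₖ (1 : Matrix (Fin 2) (Fin 2) ℂ) := by
      have := hbimod σz σz b
      rw [h2, hn] at this
      rw [hn, this, ← Matrix.mul_kronecker_mul, ← Matrix.mul_kronecker_mul,
        one_mul, mul_one]
    -- from parity covariance
    have e2 : (σz * n * σz) ⊗ₖ (1 : Matrix (Fin 2) (Fin 2) ℂ) = - ε b := by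
      have hp := hparity b
      rw [h1, map_neg, hn] at hp
      unfold Θ₂ at hp
      rw [← Matrix.mul_kronecker_mul, ← Matrix.mul_kronecker_mul] at hp
      rw [show σz * (1 : Matrix (Fin 2) (Fin 2) ℂ) * σz = 1 by
        rw [mul_one, σz_sq]] at hp
      rw [hn]
      exact hp.symm
    have : ε b = - ε b := e1.trans e2
    have h2ε : (2 : ℂ) • ε b = 0 := by
      rw [two_smul]
      nth_rewrite 2 [this]
      simp
    have := smul_eq_zero.mp h2ε
    rcases this with h | h
    · norm_num at h
    · exact h
  constructor
  · exact key a σz_a_σz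
  · have : star a₂ = σz ⊗ₖ (star a) := by
      rw [a₂, kron_star, star_σz]
    rw [this]
    exact key (star a) σz_astar_σz

end CARMarkov
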